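/- Let f : ℝ^n → ℝ ∪ {∞}, let C ⊆ ℝ^n be a nonempty closed convex set, let x̄ ∈ C ∩ dom f, and suppose epi f is locally closed around (x̄, f(x̄)). Then for every λ ∈ ℝ: D*_C 𝓔^f(x̄, f(x̄))(λ) = λ·∂_C f(x̄) := {λ x* : x* ∈ ∂_C f(x̄)} if λ > 0; D*_C 𝓔^f(x̄, f(x̄))(0) = ∂^∞_C f(x̄); and D*_C 𝓔^f(x̄, f(x̄))(λ) = ∅ if λ < 0. -/

import Mathlib

open Set Metric Filter Topology
open scoped RealInnerProductSpace Pointwise ENNReal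

variable {E : Type*} [NormedAddCommGroup E] [InnerProductSpace ℝ E]
variable {F' : Type*} [NormedAddCommGroup F'] [InnerProductSpace ℝ F']

/-- `Π(x,Ω)`: the set of closest points (Euclidean projectors) of `x` in `Ω`. -/
def projSet (x : E) (Ω : Set E) : Set E := {u | u ∈ Ω ∧ ‖u - x‖ = Metric.infDist x Ω}

/-- `Π⁻¹(u,Ω)`. -/
def projInv (u : E) (Ω : Set E) : Set E := {x | u ∈ projSet x Ω}

/-- The proximal normal cone to `Ω` at `x` with respect to `C`:
`N^p_C(x,Ω) = {v | ∃ t > 0, x + t v ∈ Π⁻¹(x, Ω ∩ C) ∩ C}`. -/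
def proxNC (C Ω : Set E) (x : E) : Set E :=
  {v | ∃ t > (0 : ℝ), x + t • v ∈ projInv x (Ω ∩ C) ∩ C}

/-- The limiting normal cone to `Ω` at `x` with respect to `C`
(sequential Painlevé–Kuratowski outer limit of `N^p_C(·,Ω)` over `Ω ∩ C ∋ x_k → x`). -/
def limNC (C Ω : Set E) (x : E) : Set E :=
  {v | ∃ (xs vs : ℕ → E),
    (∀ k, xs k ∈ Ω ∩ C) ∧ Filter.Tendsto xs Filter.atTop (nhds x) ∧
    (∀ k, vs k ∈ proxNC C Ω (xs k)) ∧ Filter.Tendsto vs Filter.atTop (nhds v)}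

/-- A pair `(x,y)` as an element of the `L²` (Euclidean) product. -/
noncomputable def toL2 (x : E) (y : F') : WithLp 2 (E × F') :=
  (WithLp.equiv 2 (E × F')).symm (x, y)

/-- The graph of a set-valued map, inside the `L²` product. -/
def gphL2 (F : E → Set F') : Set (WithLp 2 (E × F')) :=
  {p | ((WithLp.equiv 2 (E × F')) p).2 ∈ F ((WithLp.equiv 2 (E × F')) p).1}

/-- The cylinder `C × ℝ^m` inside the `L²` product. -/
def cylL2 (C : Set E) : Set (WithLp 2 (E × F')) :=
  {p | ((WithLp.equiv 2 (E × F')) p).1 ∈ C}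

/-- The limiting coderivative of `F` at `(xb,yb)` with respect to `C`:
`D*_C F(xb,yb)(y*) = {x* | (x*,-y*) ∈ N_{C×ℝ^m}((xb,yb), gph F_C)}`. -/
noncomputable def coderivWRT (C : Set E) (F : E → Set F') (xb : E) (yb : F')
    (ystar : F') : Set E :=
  {xstar | toL2 xstar (-ystar) ∈ limNC (cylL2 C) (gphL2 F ∩ cylL2 C) (toL2 xb yb)}

/-- The real value of `f : E → ℝ ∪ {∞}` (defaulting to `0` outside `dom f`). -/
noncomputable def rv (f : E → WithTop ℝ) (x : E) : ℝ := (f x).untopD 0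

/-- The epigraph of `f`, inside the `L²` product `E ×₂ ℝ`. -/
def epiL2 (f : E → WithTop ℝ) : Set (WithLp 2 (E × ℝ)) :=
  {p | f ((WithLp.equiv 2 (E × ℝ)) p).1 ≤ ((((WithLp.equiv 2 (E × ℝ)) p).2 : ℝ) : WithTop ℝ)}

/-- The epigraphical mapping `𝓔^f(x) = {α | α ≥ f(x)}`. -/
def epiMap (f : E → WithTop ℝ) : E → Set ℝ := fun x => {a : ℝ | f x ≤ (a : WithTop ℝ)}

/-- The limiting subdifferential of `f` at `xb` with respect to `C`:
`∂_C f(xb) = {x* | (x*,-1) ∈ N_{C×ℝ}((xb,f(xb)), epi f)}`. -/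
noncomputable def limSubdiffWRT (C : Set E) (f : E → WithTop ℝ) (xb : E) : Set E :=
  {v | toL2 v (-1 : ℝ) ∈ limNC (cylL2 C) (epiL2 f) (toL2 xb (rv f xb))}

/-- The singular (horizon) subdifferential of `f` at `xb` with respect to `C`:
`∂^∞_C f(xb) = {x* | (x*,0) ∈ N_{C×ℝ}((xb,f(xb)), epi f)}`. -/
noncomputable def singSubdiffWRT (C : Set E) (f : E → WithTop ℝ) (xb : E) : Set E :=
  {v | toL2 v (0 : ℝ) ∈ limNC (cylL2 C) (epiL2 f) (toL2 xb (rv f xb))}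

/-- The proximal subdifferential of `f` at `xb` with respect to `C`:
`∂^p_C f(xb) = {x* | (x*,-1) ∈ N^p_{C×ℝ}((xb,f(xb)), epi f)}`. -/
noncomputable def proxSubdiffWRT (C : Set E) (f : E → WithTop ℝ) (xb : E) : Set E :=
  {v | toL2 v (-1 : ℝ) ∈ proxNC (cylL2 C) (epiL2 f) (toL2 xb (rv f xb))}

/-! The graph of `𝓔^f` is `epi f`, and normal cones with respect to `C × ℝ` only see the part of a
set lying in `C × ℝ`, so `D*_C 𝓔^f(x̄, f(x̄))(λ)` is the set of `x*` with
`(x*, -λ) ∈ N_{C×ℝ}((x̄, f(x̄)), epi f)`. This normal cone is a cone, which gives the case `λ > 0`,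
and the case `λ = 0` is the definition of `∂^∞_C f`. For `λ < 0`: a proximal normal `(v, β)` to an
epigraph has `β ≤ 0`, since otherwise lifting the base point vertically would keep it in the
epigraph and bring it strictly closer to the projected point; this sign condition passes to the
limit. -/
lemma proxNC_inter_right (C Ω : Set E) (x : E) : proxNC C (Ω ∩ C) x = proxNC C Ω x := by
  simp only [proxNC, inter_assoc, inter_self]

lemma limNC_inter_right (C Ω : Set E) (x : E) : limNC C (Ω ∩ C) x = limNC C Ω x := by
  simp only [limNC, proxNC_inter_right, inter_assoc, inter_self]

lemma smul_mem_proxNC {c : ℝ} (hc : 0 < c) {C Ω : Set E} {x v : E}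
    (hv : v ∈ proxNC C Ω x) : c • v ∈ proxNC C Ω x := by
  obtain ⟨t, ht, hmem⟩ := hv
  exact ⟨t / c, div_pos ht hc, by rwa [smul_smul, div_mul_cancel₀ _ hc.ne']⟩

lemma smul_mem_limNC {c : ℝ} (hc : 0 < c) {C Ω : Set E} {x v : E}
    (hv : v ∈ limNC C Ω x) : c • v ∈ limNC C Ω x := by
  obtain ⟨xs, vs, hxs, hxs_lim, hvs, hvs_lim⟩ := hv
  exact ⟨xs, fun k => c • vs k, hxs, hxs_lim, fun k => smul_mem_proxNC hc (hvs k),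
    hvs_lim.const_smul c⟩

lemma smul_mem_limNC_iff {c : ℝ} (hc : 0 < c) {C Ω : Set E} {x v : E} :
    c • v ∈ limNC C Ω x ↔ v ∈ limNC C Ω x := by
  refine ⟨fun hv => ?_, smul_mem_limNC hc⟩
  simpa [smul_smul, inv_mul_cancel₀ hc.ne'] using smul_mem_limNC (inv_pos.mpr hc) hv

lemma smul_toL2 (c : ℝ) (x : E) (y : F') : c • toL2 x y = toL2 (c • x) (c • y) := rfl

lemma coderivWRT_epiMap (C : Set E) (f : E → WithTop ℝ) (xb : E) (yb l : ℝ) :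
    coderivWRT C (epiMap f) xb yb l =
      {xstar | toL2 xstar (-l) ∈ limNC (cylL2 C) (epiL2 f) (toL2 xb yb)} := by
  simp only [coderivWRT, limNC_inter_right]
  rfl

lemma snd_nonpos_of_mem_proxNC_epiL2 {f : E → WithTop ℝ} {C : Set E} {z v : WithLp 2 (E × ℝ)}
    (hv : v ∈ proxNC (cylL2 C) (epiL2 f) z) : v.snd ≤ 0 := by
  obtain ⟨t, ht, ⟨hz, hdist⟩, -⟩ := hv
  by_contra! hpos
  have hlift : 0 < t * v.snd := mul_pos ht hpos
  set w : WithLp 2 (E × ℝ) := z + toL2 0 (t * v.snd)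
  have hw : w ∈ epiL2 f ∩ cylL2 C := by
    refine ⟨?_, ?_⟩
    · show f (z.fst + 0) ≤ ((z.snd + t * v.snd : ℝ) : WithTop ℝ)
      rw [add_zero]
      exact hz.1.trans (by exact_mod_cast le_add_of_nonneg_right hlift.le)
    · show z.fst + 0 ∈ C
      rw [add_zero]
      exact hz.2
  have hle : ‖z - (z + t • v)‖ ≤ ‖w - (z + t • v)‖ := by
    rw [hdist, ← dist_eq_norm']
    exact infDist_le_dist_of_mem hw
  have hwp : w - (z + t • v) = toL2 (-(t • v.fst)) 0 := by
    rw [WithLp.ext_iff]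
    ext <;> simp [w, toL2]
  rw [hwp, toL2, WithLp.equiv_symm_apply, WithLp.norm_toLp_fst, sub_add_cancel_left, norm_neg,
    norm_neg] at hle
  have hsq := pow_le_pow_left₀ (norm_nonneg _) hle 2
  rw [WithLp.prod_norm_sq_eq_of_L2, WithLp.smul_fst, WithLp.smul_snd, Real.norm_eq_abs, sq_abs,
    smul_eq_mul] at hsq
  nlinarith

lemma snd_nonpos_of_mem_limNC_epiL2 {f : E → WithTop ℝ} {C : Set E} {z v : WithLp 2 (E × ℝ)}
    (hv : v ∈ limNC (cylL2 C) (epiL2 f) z) : v.snd ≤ 0 := by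
  obtain ⟨_, vs, -, -, hvs, hvs_lim⟩ := hv
  exact le_of_tendsto (((WithLp.continuous_snd 2 E ℝ).tendsto v).comp hvs_lim)
    (Eventually.of_forall fun k => snd_nonpos_of_mem_proxNC_epiL2 (hvs k))

theorem stmt15_general {n : ℕ}
    (f : EuclideanSpace ℝ (Fin n) → WithTop ℝ) (C : Set (EuclideanSpace ℝ (Fin n)))
    (xb : EuclideanSpace ℝ (Fin n)) :
    ∀ l : ℝ,
      (0 < l → coderivWRT C (epiMap f) xb (rv f xb) l = l • limSubdiffWRT C f xb) ∧
      coderivWRT C (epiMap f) xb (rv f xb) 0 = singSubdiffWRT C f xb ∧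
      (l < 0 → coderivWRT C (epiMap f) xb (rv f xb) l = ∅) := by
  intro l
  simp only [coderivWRT_epiMap]
  refine ⟨fun hl => ?_, by simp only [neg_zero]; rfl, fun hl => ?_⟩
  · ext xstar
    have hscale : toL2 xstar (-l) = l • toL2 (l⁻¹ • xstar) (-1 : ℝ) := by
      rw [smul_toL2, smul_inv_smul₀ hl.ne', smul_neg, smul_eq_mul, mul_one]
    rw [mem_smul_set_iff_inv_smul_mem₀ hl.ne', mem_ofPred_eq, hscale, smul_mem_limNC_iff hl]
    rfl
  · refine eq_empty_of_forall_notMem fun xstar hx => ?_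
    have hsnd := snd_nonpos_of_mem_limNC_epiL2 hx
    simp only [toL2, WithLp.equiv_symm_apply, WithLp.toLp_snd] at hsnd
    linarith

/-- Theorem 2: `D*_C 𝓔^f(xb,f(xb))(λ)` equals `λ∂_C f(xb)` for `λ > 0`,
`∂^∞_C f(xb)` for `λ = 0`, and is empty for `λ < 0`. -/
theorem stmt15 {n : ℕ}
    (f : EuclideanSpace ℝ (Fin n) → WithTop ℝ) (C : Set (EuclideanSpace ℝ (Fin n)))
    (hCne : C.Nonempty) (hCcl : IsClosed C) (hCcv : Convex ℝ C)
    (xb : EuclideanSpace ℝ (Fin n)) (hxbC : xb ∈ C) (hxbdom : f xb ≠ ⊤)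
    (hloc : ∃ r > (0 : ℝ), IsClosed (epiL2 f ∩ Metric.closedBall (toL2 xb (rv f xb)) r)) :
    ∀ l : ℝ,
      (0 < l → coderivWRT C (epiMap f) xb (rv f xb) l = l • limSubdiffWRT C f xb) ∧
      coderivWRT C (epiMap f) xb (rv f xb) 0 = singSubdiffWRT C f xb ∧
      (l < 0 → coderivWRT C (epiMap f) xb (rv f xb) l = ∅) :=
  stmt15_general f C xb
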